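/- Contraction property of the fixed-point map of the implicit scheme: Let δt > 0, (p⁻, q⁻) ∈ K_D × X, and let (w₁, w₂), (w̃₁, w̃₂) ∈ L²(Ω) × L²(Ω). Let U₁, Ũ₁ ∈ K_D be the linearized obstacle solutions for data (w₁, w₂) and (w̃₁, w̃₂) respectively, and let U₂, Ũ₂ ∈ X be the linearized reaction–diffusion solutions for data (w₁, w₂) and (w̃₁, w̃₂) respectively (with the same (p⁻, q⁻) and δt). Then ‖Π(U₁ − Ũ₁)‖_{L²(Ω)} + ‖Π(U₂ − Ũ₂)‖_{L²(Ω)} ≤ 2Mδt(‖w₁ − w̃₁‖_{L²(Ω)} + ‖w₂ − w̃₂‖_{L²(Ω)}). In particular, if δt < 1/(2M) the map (w₁, w₂) ↦ (ΠU₁, ΠU₂) is a contraction of Π(K_D) × Π(X) ⊂ L²(Ω) × L²(Ω). -/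

import Mathlib

open MeasureTheory RealInnerProductSpace

noncomputable section

/-- Euclidean space `ℝ^d`. -/
abbrev Euc (d : ℕ) : Type := EuclideanSpace ℝ (Fin d)

/-- The discrete convex set `K_D = {φ ∈ X : Πφ ≥ χ_D a.e. in Ω}`. -/
def KD {α : Type} [MeasurableSpace α] (μ : Measure α)
    {X : Type} [AddCommGroup X] [Module ℝ X]
    (Pi : X →ₗ[ℝ] Lp ℝ 2 μ) (χD : Lp ℝ 2 μ) : Set X :=
  {φ : X | ∀ᵐ x ∂μ, χD x ≤ Pi φ x}

/-- `U₁ ∈ K_D` is a linearized obstacle solution for data `(w₁, w₂)`. -/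
def IsLinObstacleSol {α : Type} [MeasurableSpace α] (μ : Measure α)
    {V : Type} [NormedAddCommGroup V] [InnerProductSpace ℝ V]
    {X : Type} [AddCommGroup X] [Module ℝ X]
    (Pi : X →ₗ[ℝ] Lp ℝ 2 μ) (G : X →ₗ[ℝ] Lp V 2 μ) (χD : Lp ℝ 2 μ)
    (A : α → V →ₗ[ℝ] V) (f : ℝ → ℝ → ℝ)
    (δt : ℝ) (pm : X) (w₁ w₂ : Lp ℝ 2 μ) (U₁ : X) : Prop :=
  U₁ ∈ KD μ Pi χD ∧
  ∀ φ ∈ KD μ Pi χD,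
    (∫ x, δt⁻¹ * (Pi U₁ x - Pi pm x) * (Pi U₁ x - Pi φ x) ∂μ)
      + (∫ x, ⟪A x (G U₁ x), G U₁ x - G φ x⟫ ∂μ)
      ≤ ∫ x, f (w₁ x) (w₂ x) * (Pi U₁ x - Pi φ x) ∂μ

/-- `U₂ ∈ X` is a linearized reaction–diffusion solution for data `(w₁, w₂)`. -/
def IsLinReactionSol {α : Type} [MeasurableSpace α] (μ : Measure α)
    {V : Type} [NormedAddCommGroup V] [InnerProductSpace ℝ V]
    {X : Type} [AddCommGroup X] [Module ℝ X]
    (Pi : X →ₗ[ℝ] Lp ℝ 2 μ) (G : X →ₗ[ℝ] Lp V 2 μ)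
    (B : α → V →ₗ[ℝ] V) (g : ℝ → ℝ → ℝ)
    (δt : ℝ) (qm : X) (w₁ w₂ : Lp ℝ 2 μ) (U₂ : X) : Prop :=
  ∀ ψ : X,
    (∫ x, δt⁻¹ * (Pi U₂ x - Pi qm x) * (Pi ψ x) ∂μ)
      + (∫ x, ⟪B x (G U₂ x), G ψ x⟫ ∂μ)
      = ∫ x, g (w₁ x) (w₂ x) * (Pi ψ x) ∂μ


section ContractionHelpers

variable {α : Type} [MeasurableSpace α] {μ : Measure α}

lemma real_inner_mul' (a b : ℝ) : ⟪a, b⟫ = a * b := by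
  simp [RCLike.inner_apply]
  ring

lemma inner_eq_integral_mul' (u v : Lp ℝ 2 μ) : ⟪u, v⟫ = ∫ x, u x * v x ∂μ := by
  rw [L2.inner_def]
  simp [RCLike.inner_apply]
  exact integral_congr_ae (Filter.Eventually.of_forall fun x => mul_comm _ _)

/-- Cauchy–Schwarz for a symmetric positive operator bounded by `C`. -/
lemma opCS' {V : Type} [NormedAddCommGroup V] [InnerProductSpace ℝ V]
    (T : V →ₗ[ℝ] V) {C : ℝ} (hC : 0 ≤ C)
    (hsym : ∀ ξ η : V, ⟪T ξ, η⟫ = ⟪ξ, T η⟫)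
    (hell : ∀ ξ : V, 0 ≤ ⟪ξ, T ξ⟫ ∧ ⟪ξ, T ξ⟫ ≤ C * ‖ξ‖ ^ 2) (ξ η : V) :
    |⟪T ξ, η⟫| ≤ C * (‖ξ‖ * ‖η‖) := by
  have hcomm : ∀ u v : V, ⟪T u, v⟫ = ⟪T v, u⟫ := fun u v => by
    rw [hsym, real_inner_comm]
  have hquad : ∀ t : ℝ, 0 ≤ ⟪T η, η⟫ * (t * t) + (2 * ⟪T ξ, η⟫) * t + ⟪T ξ, ξ⟫ := by
    intro t
    have h0 : 0 ≤ ⟪T (ξ + t • η), ξ + t • η⟫ := by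
      rw [hsym]; exact (hell _).1
    have hexp : ⟪T (ξ + t • η), ξ + t • η⟫
        = ⟪T η, η⟫ * (t * t) + (2 * ⟪T ξ, η⟫) * t + ⟪T ξ, ξ⟫ := by
      simp only [map_add, LinearMap.map_smul, inner_add_left, inner_add_right,
        real_inner_smul_left, real_inner_smul_right]
      rw [hcomm η ξ]
      ring
    linarith [hexp ▸ h0]
  have hd := discrim_le_zero hquad
  rw [discrim] at hd
  have h1 : ⟪T ξ, η⟫ ^ 2 ≤ ⟪T η, η⟫ * ⟪T ξ, ξ⟫ := by nlinarith
  have h2 : ⟪T η, η⟫ ≤ C * ‖η‖ ^ 2 := by rw [hsym]; exact (hell η).2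
  have h3 : ⟪T ξ, ξ⟫ ≤ C * ‖ξ‖ ^ 2 := by rw [hsym]; exact (hell ξ).2
  have h2' : 0 ≤ ⟪T η, η⟫ := by rw [hsym]; exact (hell η).1
  have h3' : 0 ≤ ⟪T ξ, ξ⟫ := by rw [hsym]; exact (hell ξ).1
  have hsq : ⟪T ξ, η⟫ ^ 2 ≤ (C * (‖ξ‖ * ‖η‖)) ^ 2 := by
    nlinarith [norm_nonneg ξ, norm_nonneg η]
  have hfin := Real.sqrt_le_sqrt hsq
  rwa [Real.sqrt_sq_eq_abs, Real.sqrt_sq (by positivity)] at hfin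

lemma opNormBound' {V : Type} [NormedAddCommGroup V] [InnerProductSpace ℝ V]
    (T : V →ₗ[ℝ] V) {C : ℝ} (hC : 0 ≤ C)
    (hsym : ∀ ξ η : V, ⟪T ξ, η⟫ = ⟪ξ, T η⟫)
    (hell : ∀ ξ : V, 0 ≤ ⟪ξ, T ξ⟫ ∧ ⟪ξ, T ξ⟫ ≤ C * ‖ξ‖ ^ 2) (v : V) :
    ‖T v‖ ≤ C * ‖v‖ := by
  have h := opCS' T hC hsym hell v (T v)
  have h2 : ‖T v‖ ^ 2 ≤ C * (‖v‖ * ‖T v‖) := by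
    calc ‖T v‖ ^ 2 = ⟪T v, T v⟫ := (real_inner_self_eq_norm_sq _).symm
    _ ≤ |⟪T v, T v⟫| := le_abs_self _
    _ ≤ C * (‖v‖ * ‖T v‖) := h
  rcases eq_or_lt_of_le (norm_nonneg (T v)) with h0 | h0
  · rw [← h0]; positivity
  · nlinarith

lemma aesm_op' {d : ℕ} (A : α → Euc d →ₗ[ℝ] Euc d)
    (hA : ∀ ξ, Measurable fun x => A x ξ)
    {u : α → Euc d} (hu : AEStronglyMeasurable u μ) :
    AEStronglyMeasurable (fun x => A x (u x)) μ := by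
  set b := EuclideanSpace.basisFun (Fin d) ℝ with hb
  have key : (fun x => A x (u x))
      = fun x => ∑ i, ⟪b i, u x⟫ • A x (b i) := by
    funext x
    conv_lhs => rw [← b.sum_repr' (u x)]
    rw [map_sum]
    simp only [LinearMap.map_smul]
  rw [key]
  exact Finset.aestronglyMeasurable_fun_sum _ fun i _ =>
    (aestronglyMeasurable_const.inner (𝕜 := ℝ) hu).smul (hA _).aestronglyMeasurable

lemma memLp_op' {d : ℕ} (A : α → Euc d →ₗ[ℝ] Euc d)
    (hA : ∀ ξ, Measurable fun x => A x ξ) {C : ℝ} (hC : 0 ≤ C)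
    (hsym : ∀ᵐ x ∂μ, ∀ ξ η, ⟪A x ξ, η⟫ = ⟪ξ, A x η⟫)
    (hell : ∀ᵐ x ∂μ, ∀ ξ, 0 ≤ ⟪ξ, A x ξ⟫ ∧ ⟪ξ, A x ξ⟫ ≤ C * ‖ξ‖ ^ 2)
    (u : Lp (Euc d) 2 μ) :
    MemLp (fun x => A x (u x)) 2 μ := by
  have hg : MemLp (fun x => C * ‖u x‖) 2 μ := (Lp.memLp u).norm.const_mul C
  refine MemLp.of_le hg (aesm_op' A hA (Lp.aestronglyMeasurable u)) ?_
  filter_upwards [hsym, hell] with x hx1 hx2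
  calc ‖A x (u x)‖ ≤ C * ‖u x‖ := opNormBound' (A x) hC hx1 hx2 (u x)
  _ ≤ ‖C * ‖u x‖‖ := le_abs_self _

/-- The key nonnegativity: `0 ≤ ⟪A∘u - A∘v, u - v⟫` in `L²`. -/
lemma inner_toLp_sub_nonneg {d : ℕ} (A : α → Euc d →ₗ[ℝ] Euc d)
    (hell0 : ∀ᵐ x ∂μ, ∀ ξ, 0 ≤ ⟪ξ, A x ξ⟫)
    (u v : Lp (Euc d) 2 μ)
    (hu : MemLp (fun x => A x (u x)) 2 μ) (hv : MemLp (fun x => A x (v x)) 2 μ) :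
    0 ≤ ⟪hu.toLp _ - hv.toLp _, u - v⟫ := by
  rw [L2.inner_def]
  refine integral_nonneg_of_ae ?_
  filter_upwards [Lp.coeFn_sub (hu.toLp _) (hv.toLp _), hu.coeFn_toLp, hv.coeFn_toLp,
    Lp.coeFn_sub u v, hell0] with x h1 h2 h3 h4 h0
  rw [h1]
  simp only [Pi.sub_apply]
  rw [h2, h3, h4]
  simp only [Pi.sub_apply]
  rw [← map_sub]
  calc (0:ℝ) ≤ ⟪u x - v x, A x (u x - v x)⟫ := h0 _
  _ = ⟪A x (u x - v x), u x - v x⟫ := real_inner_comm _ _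

lemma memLp_lip' [IsFiniteMeasure μ] (f : ℝ → ℝ → ℝ) {M : ℝ} (hM : 0 ≤ M)
    (hf : ∀ a b a' b', |f a b - f a' b'| ≤ M * (|a - a'| + |b - b'|))
    (w₁ w₂ : Lp ℝ 2 μ) : MemLp (fun x => f (w₁ x) (w₂ x)) 2 μ := by
  have hcont : Continuous fun p : ℝ × ℝ => f p.1 p.2 := by
    refine (LipschitzWith.of_dist_le_mul (K := ⟨2 * M, by positivity⟩) fun p q => ?_).continuous
    have h := hf p.1 p.2 q.1 q.2
    have h1 : |p.1 - q.1| ≤ dist p q := by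
      rw [Prod.dist_eq, ← Real.dist_eq]; exact le_max_left _ _
    have h2 : |p.2 - q.2| ≤ dist p q := by
      rw [Prod.dist_eq, ← Real.dist_eq]; exact le_max_right _ _
    have hd : 0 ≤ dist p q := dist_nonneg
    rw [Real.dist_eq]
    push_cast
    show |f p.1 p.2 - f q.1 q.2| ≤ 2 * M * dist p q
    nlinarith
  have haesm : AEStronglyMeasurable (fun x => f (w₁ x) (w₂ x)) μ :=
    hcont.comp_aestronglyMeasurable
      ((Lp.aestronglyMeasurable w₁).prodMk (Lp.aestronglyMeasurable w₂))
  have hg : MemLp (fun x => |f 0 0| + M * (‖w₁ x‖ + ‖w₂ x‖)) 2 μ :=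
    by
      have h1 := memLp_const (μ := μ) (p := 2) |f 0 0|
      have h2 := ((Lp.memLp w₁).norm.add (Lp.memLp w₂).norm).const_mul M
      exact h1.add h2
  refine MemLp.of_le hg haesm (Filter.Eventually.of_forall fun x => ?_)
  have h := hf (w₁ x) (w₂ x) 0 0
  simp only [sub_zero] at h
  have h0 : |f (w₁ x) (w₂ x)| - |f 0 0| ≤ |f (w₁ x) (w₂ x) - f 0 0| :=
    abs_sub_abs_le_abs_sub _ _
  have hgnn : 0 ≤ |f 0 0| + M * (‖w₁ x‖ + ‖w₂ x‖) := by positivity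
  rw [Real.norm_eq_abs, Real.norm_eq_abs, abs_of_nonneg hgnn]
  simp only [Real.norm_eq_abs]
  linarith

lemma inner_sub_le' {M : ℝ} (hM : 0 ≤ M) (u v e Δ₁ Δ₂ : Lp ℝ 2 μ)
    (h : ∀ᵐ x ∂μ, |u x - v x| ≤ M * (|Δ₁ x| + |Δ₂ x|)) :
    ⟪u - v, e⟫ ≤ M * (‖Δ₁‖ + ‖Δ₂‖) * ‖e‖ := by
  set D2 : Lp ℝ 2 μ := M • (|Δ₁| + |Δ₂|) with hD2
  have hstep : ⟪u - v, e⟫ ≤ ⟪D2, |e|⟫ := by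
    rw [inner_eq_integral_mul', inner_eq_integral_mul']
    refine integral_mono_ae ?_ ?_ ?_
    · simpa only [real_inner_mul'] using L2.integrable_inner (𝕜 := ℝ) (u - v) e
    · simpa only [real_inner_mul'] using L2.integrable_inner (𝕜 := ℝ) D2 |e|
    · filter_upwards [h, Lp.coeFn_sub u v, Lp.coeFn_smul (M : ℝ) (|Δ₁| + |Δ₂|),
        Lp.coeFn_add |Δ₁| |Δ₂|, Lp.coeFn_abs Δ₁, Lp.coeFn_abs Δ₂, Lp.coeFn_abs e]
        with x hx hsub hsmul hadd habs1 habs2 habse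
      have h1 : (u - v) x * e x ≤ |(u - v) x| * |e x| := by
        rw [← abs_mul]; exact le_abs_self _
      have h2 : |(u - v) x| ≤ M * (|Δ₁ x| + |Δ₂ x|) := by
        rw [hsub]; simpa using hx
      have h3 : D2 x = M * (|Δ₁ x| + |Δ₂ x|) := by
        rw [hD2, hsmul]
        simp only [Pi.smul_apply, smul_eq_mul]
        rw [hadd]
        simp only [Pi.add_apply]
        rw [habs1, habs2]
      rw [h3, habse]
      calc (u - v) x * e x ≤ |(u - v) x| * |e x| := h1
      _ ≤ M * (|Δ₁ x| + |Δ₂ x|) * |e x| :=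
        mul_le_mul_of_nonneg_right h2 (abs_nonneg _)
  have hnorm : ‖D2‖ ≤ M * (‖Δ₁‖ + ‖Δ₂‖) := by
    rw [hD2, norm_smul, Real.norm_eq_abs, abs_of_nonneg hM]
    have htri := norm_add_le |Δ₁| |Δ₂|
    rw [norm_abs_eq_norm, norm_abs_eq_norm] at htri
    exact mul_le_mul_of_nonneg_left htri hM
  calc ⟪u - v, e⟫ ≤ ⟪D2, |e|⟫ := hstep
  _ ≤ ‖D2‖ * ‖|e|‖ := real_inner_le_norm _ _
  _ ≤ M * (‖Δ₁‖ + ‖Δ₂‖) * ‖e‖ := by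
      rw [norm_abs_eq_norm]
      exact mul_le_mul_of_nonneg_right hnorm (norm_nonneg e)

lemma norm_le_of_quad {δt C x : ℝ} (hδt : 0 < δt) (hC : 0 ≤ C) (hx : 0 ≤ x)
    (h : δt⁻¹ * x ^ 2 ≤ C * x) : x ≤ δt * C := by
  rcases eq_or_lt_of_le hx with h0 | h0
  · rw [← h0]; positivity
  · have h2 : x * x ≤ (δt * C) * x := by
      calc x * x = δt * (δt⁻¹ * x ^ 2) := by field_simp
      _ ≤ δt * (C * x) := mul_le_mul_of_nonneg_left h hδt.le
      _ = (δt * C) * x := by ring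
    exact le_of_mul_le_mul_right h2 h0

end ContractionHelpers

set_option maxHeartbeats 2000000 in
/-- **Contraction property of the fixed-point map of the implicit scheme.**
If `U₁, Ũ₁` are the linearized obstacle solutions and `U₂, Ũ₂` the linearized
reaction–diffusion solutions for data `(w₁, w₂)` resp. `(w̃₁, w̃₂)` (same `(p⁻,q⁻)`
and `δt`), then
`‖Π(U₁ − Ũ₁)‖ + ‖Π(U₂ − Ũ₂)‖ ≤ 2Mδt(‖w₁ − w̃₁‖ + ‖w₂ − w̃₂‖)`,
so that for `δt < 1/(2M)` the fixed-point map is a contraction. -/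

theorem fixed_point_map_contraction
    {dim : ℕ} (hdim : 1 ≤ dim)
    (Ω : Set (Euc dim)) (hΩo : IsOpen Ω) (hΩb : Bornology.IsBounded Ω)
    (hΩc : IsConnected Ω)
    {X : Type} [AddCommGroup X] [Module ℝ X] [FiniteDimensional ℝ X]
    (Pi : X →ₗ[ℝ] Lp ℝ 2 (volume.restrict Ω))
    (G : X →ₗ[ℝ] Lp (Euc dim) 2 (volume.restrict Ω))
    (hGnorm : ∀ φ : X, G φ = 0 → φ = 0)
    (χD : Lp ℝ 2 (volume.restrict Ω))
    (A B : Euc dim → Euc dim →ₗ[ℝ] Euc dim)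
    (hAmeas : ∀ ξ, Measurable fun x => A x ξ)
    (hBmeas : ∀ ξ, Measurable fun x => B x ξ)
    (d₁ d₂ : ℝ) (hd₁ : 0 < d₁) (hd₁₂ : d₁ ≤ d₂)
    (hAsym : ∀ᵐ x ∂(volume.restrict Ω), ∀ ξ η, ⟪A x ξ, η⟫ = ⟪ξ, A x η⟫)
    (hBsym : ∀ᵐ x ∂(volume.restrict Ω), ∀ ξ η, ⟪B x ξ, η⟫ = ⟪ξ, B x η⟫)
    (hAell : ∀ᵐ x ∂(volume.restrict Ω), ∀ ξ,
      d₁ * ‖ξ‖ ^ 2 ≤ ⟪ξ, A x ξ⟫ ∧ ⟪ξ, A x ξ⟫ ≤ d₂ * ‖ξ‖ ^ 2)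
    (hBell : ∀ᵐ x ∂(volume.restrict Ω), ∀ ξ,
      d₁ * ‖ξ‖ ^ 2 ≤ ⟪ξ, B x ξ⟫ ∧ ⟪ξ, B x ξ⟫ ≤ d₂ * ‖ξ‖ ^ 2)
    (f g : ℝ → ℝ → ℝ) (M : ℝ) (hM : 0 < M)
    (hf : ∀ a b a' b', |f a b - f a' b'| ≤ M * (|a - a'| + |b - b'|))
    (hg : ∀ a b a' b', |g a b - g a' b'| ≤ M * (|a - a'| + |b - b'|))
    (δt : ℝ) (hδt : 0 < δt)
    (pm : X) (hpm : pm ∈ KD (volume.restrict Ω) Pi χD) (qm : X)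
    (w₁ w₂ w₁' w₂' : Lp ℝ 2 (volume.restrict Ω)) (U₁ U₁' U₂ U₂' : X)
    (hU₁ : IsLinObstacleSol (volume.restrict Ω) Pi G χD A f δt pm w₁ w₂ U₁)
    (hU₁' : IsLinObstacleSol (volume.restrict Ω) Pi G χD A f δt pm w₁' w₂' U₁')
    (hU₂ : IsLinReactionSol (volume.restrict Ω) Pi G B g δt qm w₁ w₂ U₂)
    (hU₂' : IsLinReactionSol (volume.restrict Ω) Pi G B g δt qm w₁' w₂' U₂') :
    ‖Pi (U₁ - U₁')‖ + ‖Pi (U₂ - U₂')‖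
      ≤ 2 * M * δt * (‖w₁ - w₁'‖ + ‖w₂ - w₂'‖) := by
  have hfin : IsFiniteMeasure (volume.restrict Ω) := by
    constructor
    rw [Measure.restrict_apply_univ]
    exact hΩb.measure_lt_top
  have hd₂ : (0:ℝ) ≤ d₂ := le_trans hd₁.le hd₁₂
  have hSnn : (0:ℝ) ≤ ‖w₁ - w₁'‖ + ‖w₂ - w₂'‖ := by positivity
  have hAell' : ∀ᵐ x ∂(volume.restrict Ω), ∀ ξ,
      0 ≤ ⟪ξ, A x ξ⟫ ∧ ⟪ξ, A x ξ⟫ ≤ d₂ * ‖ξ‖ ^ 2 :=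
    hAell.mono fun x hx ξ => ⟨le_trans (by positivity) (hx ξ).1, (hx ξ).2⟩
  have hBell' : ∀ᵐ x ∂(volume.restrict Ω), ∀ ξ,
      0 ≤ ⟪ξ, B x ξ⟫ ∧ ⟪ξ, B x ξ⟫ ≤ d₂ * ‖ξ‖ ^ 2 :=
    hBell.mono fun x hx ξ => ⟨le_trans (by positivity) (hx ξ).1, (hx ξ).2⟩
  have hAell0 : ∀ᵐ x ∂(volume.restrict Ω), ∀ ξ, 0 ≤ ⟪ξ, A x ξ⟫ :=
    hAell'.mono fun x hx ξ => (hx ξ).1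
  have hBell0 : ∀ᵐ x ∂(volume.restrict Ω), ∀ ξ, 0 ≤ ⟪ξ, B x ξ⟫ :=
    hBell'.mono fun x hx ξ => (hx ξ).1
  -- membership of the composed functions in L²
  have hFw : MemLp (fun x => f (w₁ x) (w₂ x)) 2 (volume.restrict Ω) :=
    memLp_lip' f hM.le hf w₁ w₂
  have hFw' : MemLp (fun x => f (w₁' x) (w₂' x)) 2 (volume.restrict Ω) :=
    memLp_lip' f hM.le hf w₁' w₂'
  have hGw : MemLp (fun x => g (w₁ x) (w₂ x)) 2 (volume.restrict Ω) :=
    memLp_lip' g hM.le hg w₁ w₂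
  have hGw' : MemLp (fun x => g (w₁' x) (w₂' x)) 2 (volume.restrict Ω) :=
    memLp_lip' g hM.le hg w₁' w₂'
  have hAGu : MemLp (fun x => A x (G U₁ x)) 2 (volume.restrict Ω) :=
    memLp_op' A hAmeas hd₂ hAsym hAell' (G U₁)
  have hAGu' : MemLp (fun x => A x (G U₁' x)) 2 (volume.restrict Ω) :=
    memLp_op' A hAmeas hd₂ hAsym hAell' (G U₁')
  have hBGu : MemLp (fun x => B x (G U₂ x)) 2 (volume.restrict Ω) :=
    memLp_op' B hBmeas hd₂ hBsym hBell' (G U₂)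
  have hBGu' : MemLp (fun x => B x (G U₂' x)) 2 (volume.restrict Ω) :=
    memLp_op' B hBmeas hd₂ hBsym hBell' (G U₂')
  -- Lipschitz bounds
  have hlipf : ∀ᵐ x ∂(volume.restrict Ω),
      |hFw.toLp _ x - hFw'.toLp _ x| ≤ M * (|(w₁ - w₁') x| + |(w₂ - w₂') x|) := by
    filter_upwards [hFw.coeFn_toLp, hFw'.coeFn_toLp, Lp.coeFn_sub w₁ w₁', Lp.coeFn_sub w₂ w₂']
      with x h1 h2 h3 h4
    rw [h1, h2, h3, h4]
    simpa using hf (w₁ x) (w₂ x) (w₁' x) (w₂' x)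
  have hlipg : ∀ᵐ x ∂(volume.restrict Ω),
      |hGw.toLp _ x - hGw'.toLp _ x| ≤ M * (|(w₁ - w₁') x| + |(w₂ - w₂') x|) := by
    filter_upwards [hGw.coeFn_toLp, hGw'.coeFn_toLp, Lp.coeFn_sub w₁ w₁', Lp.coeFn_sub w₂ w₂']
      with x h1 h2 h3 h4
    rw [h1, h2, h3, h4]
    simpa using hg (w₁ x) (w₂ x) (w₁' x) (w₂' x)
  ---------------------------------------------------------------
  -- Obstacle part
  ---------------------------------------------------------------
  have hT1 : (∫ x, δt⁻¹ * (Pi U₁ x - Pi pm x) * (Pi U₁ x - Pi U₁' x) ∂(volume.restrict Ω))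
      = δt⁻¹ * ⟪Pi U₁ - Pi pm, Pi U₁ - Pi U₁'⟫ := by
    rw [inner_eq_integral_mul', ← integral_const_mul]
    refine integral_congr_ae ?_
    filter_upwards [Lp.coeFn_sub (Pi U₁) (Pi pm), Lp.coeFn_sub (Pi U₁) (Pi U₁')] with x h1 h2
    rw [h1, h2]
    simp only [_root_.Pi.sub_apply]
    ring
  have hT1' : (∫ x, δt⁻¹ * (Pi U₁' x - Pi pm x) * (Pi U₁' x - Pi U₁ x) ∂(volume.restrict Ω))
      = δt⁻¹ * ⟪Pi U₁' - Pi pm, -(Pi U₁ - Pi U₁')⟫ := by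
    rw [inner_eq_integral_mul', ← integral_const_mul]
    refine integral_congr_ae ?_
    filter_upwards [Lp.coeFn_sub (Pi U₁') (Pi pm), Lp.coeFn_neg (Pi U₁ - Pi U₁'),
      Lp.coeFn_sub (Pi U₁) (Pi U₁')] with x h1 h2 h3
    rw [h1, h2]
    simp only [_root_.Pi.sub_apply, _root_.Pi.neg_apply]
    rw [h3]
    simp only [_root_.Pi.sub_apply]
    ring
  have hTA : (∫ x, ⟪A x (G U₁ x), G U₁ x - G U₁' x⟫ ∂(volume.restrict Ω))
      = ⟪hAGu.toLp _, G U₁ - G U₁'⟫ := by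
    rw [L2.inner_def]
    refine integral_congr_ae ?_
    filter_upwards [hAGu.coeFn_toLp, Lp.coeFn_sub (G U₁) (G U₁')] with x h1 h2
    rw [h1, h2]
    simp only [_root_.Pi.sub_apply]
  have hTA' : (∫ x, ⟪A x (G U₁' x), G U₁' x - G U₁ x⟫ ∂(volume.restrict Ω))
      = ⟪hAGu'.toLp _, -(G U₁ - G U₁')⟫ := by
    rw [L2.inner_def]
    refine integral_congr_ae ?_
    filter_upwards [hAGu'.coeFn_toLp, Lp.coeFn_neg (G U₁ - G U₁'),
      Lp.coeFn_sub (G U₁) (G U₁')] with x h1 h2 h3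
    rw [h1, h2]
    simp only [_root_.Pi.neg_apply]
    rw [h3]
    simp only [_root_.Pi.sub_apply, neg_sub]
  have hTF : (∫ x, f (w₁ x) (w₂ x) * (Pi U₁ x - Pi U₁' x) ∂(volume.restrict Ω))
      = ⟪hFw.toLp _, Pi U₁ - Pi U₁'⟫ := by
    rw [inner_eq_integral_mul']
    refine integral_congr_ae ?_
    filter_upwards [hFw.coeFn_toLp, Lp.coeFn_sub (Pi U₁) (Pi U₁')] with x h1 h2
    rw [h1, h2]
    simp only [_root_.Pi.sub_apply]
  have hTF' : (∫ x, f (w₁' x) (w₂' x) * (Pi U₁' x - Pi U₁ x) ∂(volume.restrict Ω))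
      = ⟪hFw'.toLp _, -(Pi U₁ - Pi U₁')⟫ := by
    rw [inner_eq_integral_mul']
    refine integral_congr_ae ?_
    filter_upwards [hFw'.coeFn_toLp, Lp.coeFn_neg (Pi U₁ - Pi U₁'),
      Lp.coeFn_sub (Pi U₁) (Pi U₁')] with x h1 h2 h3
    rw [h1, h2]
    simp only [_root_.Pi.neg_apply]
    rw [h3]
    simp only [_root_.Pi.sub_apply, neg_sub]
  have hin1 := hU₁.2 U₁' hU₁'.1
  have hin2 := hU₁'.2 U₁ hU₁.1
  rw [hT1, hTA, hTF] at hin1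
  rw [hT1', hTA', hTF'] at hin2
  have hQ1 : 0 ≤ ⟪hAGu.toLp _ - hAGu'.toLp _, G U₁ - G U₁'⟫ :=
    inner_toLp_sub_nonneg A hAell0 (G U₁) (G U₁') hAGu hAGu'
  have hbF : ⟪hFw.toLp _ - hFw'.toLp _, Pi U₁ - Pi U₁'⟫
      ≤ M * (‖w₁ - w₁'‖ + ‖w₂ - w₂'‖) * ‖Pi U₁ - Pi U₁'‖ :=
    inner_sub_le' hM.le _ _ _ _ _ hlipf
  have hidr : δt⁻¹ * ⟪Pi U₁ - Pi pm, Pi U₁ - Pi U₁'⟫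
      + δt⁻¹ * ⟪Pi U₁' - Pi pm, -(Pi U₁ - Pi U₁')⟫
      = δt⁻¹ * ‖Pi U₁ - Pi U₁'‖ ^ 2 := by
    rw [inner_neg_right]
    have h2 : ⟪Pi U₁ - Pi pm, Pi U₁ - Pi U₁'⟫ - ⟪Pi U₁' - Pi pm, Pi U₁ - Pi U₁'⟫
        = ‖Pi U₁ - Pi U₁'‖ ^ 2 := by
      rw [← inner_sub_left, sub_sub_sub_cancel_right, real_inner_self_eq_norm_sq]
    linear_combination δt⁻¹ * h2
  have hidA : ⟪hAGu.toLp _, G U₁ - G U₁'⟫ + ⟪hAGu'.toLp _, -(G U₁ - G U₁')⟫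
      = ⟪hAGu.toLp _ - hAGu'.toLp _, G U₁ - G U₁'⟫ := by
    rw [inner_neg_right, ← sub_eq_add_neg, ← inner_sub_left]
  have hidF : ⟪hFw.toLp _, Pi U₁ - Pi U₁'⟫ + ⟪hFw'.toLp _, -(Pi U₁ - Pi U₁')⟫
      = ⟪hFw.toLp _ - hFw'.toLp _, Pi U₁ - Pi U₁'⟫ := by
    rw [inner_neg_right, ← sub_eq_add_neg, ← inner_sub_left]
  have hquad1 : δt⁻¹ * ‖Pi U₁ - Pi U₁'‖ ^ 2
      ≤ M * (‖w₁ - w₁'‖ + ‖w₂ - w₂'‖) * ‖Pi U₁ - Pi U₁'‖ := by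
    linarith [add_le_add hin1 hin2]
  have hn1 : ‖Pi U₁ - Pi U₁'‖ ≤ δt * (M * (‖w₁ - w₁'‖ + ‖w₂ - w₂'‖)) :=
    norm_le_of_quad hδt (by positivity) (norm_nonneg _) hquad1
  ---------------------------------------------------------------
  -- Reaction part
  ---------------------------------------------------------------
  have hr1 := hU₂ (U₂ - U₂')
  have hr2 := hU₂' (U₂ - U₂')
  simp only [map_sub] at hr1 hr2
  have hK1 : (∫ x, δt⁻¹ * (Pi U₂ x - Pi qm x) * ((Pi U₂ - Pi U₂') x) ∂(volume.restrict Ω))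
      = δt⁻¹ * ⟪Pi U₂ - Pi qm, Pi U₂ - Pi U₂'⟫ := by
    rw [inner_eq_integral_mul', ← integral_const_mul]
    refine integral_congr_ae ?_
    filter_upwards [Lp.coeFn_sub (Pi U₂) (Pi qm)] with x h1
    rw [h1]
    simp only [_root_.Pi.sub_apply]
    ring
  have hK1' : (∫ x, δt⁻¹ * (Pi U₂' x - Pi qm x) * ((Pi U₂ - Pi U₂') x) ∂(volume.restrict Ω))
      = δt⁻¹ * ⟪Pi U₂' - Pi qm, Pi U₂ - Pi U₂'⟫ := by
    rw [inner_eq_integral_mul', ← integral_const_mul]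
    refine integral_congr_ae ?_
    filter_upwards [Lp.coeFn_sub (Pi U₂') (Pi qm)] with x h1
    rw [h1]
    simp only [_root_.Pi.sub_apply]
    ring
  have hK2 : (∫ x, ⟪B x (G U₂ x), (G U₂ - G U₂') x⟫ ∂(volume.restrict Ω))
      = ⟪hBGu.toLp _, G U₂ - G U₂'⟫ := by
    rw [L2.inner_def]
    refine integral_congr_ae ?_
    filter_upwards [hBGu.coeFn_toLp] with x h1
    rw [h1]
  have hK2' : (∫ x, ⟪B x (G U₂' x), (G U₂ - G U₂') x⟫ ∂(volume.restrict Ω))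
      = ⟪hBGu'.toLp _, G U₂ - G U₂'⟫ := by
    rw [L2.inner_def]
    refine integral_congr_ae ?_
    filter_upwards [hBGu'.coeFn_toLp] with x h1
    rw [h1]
  have hKG : (∫ x, g (w₁ x) (w₂ x) * ((Pi U₂ - Pi U₂') x) ∂(volume.restrict Ω))
      = ⟪hGw.toLp _, Pi U₂ - Pi U₂'⟫ := by
    rw [inner_eq_integral_mul']
    refine integral_congr_ae ?_
    filter_upwards [hGw.coeFn_toLp] with x h1
    rw [h1]
  have hKG' : (∫ x, g (w₁' x) (w₂' x) * ((Pi U₂ - Pi U₂') x) ∂(volume.restrict Ω))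
      = ⟪hGw'.toLp _, Pi U₂ - Pi U₂'⟫ := by
    rw [inner_eq_integral_mul']
    refine integral_congr_ae ?_
    filter_upwards [hGw'.coeFn_toLp] with x h1
    rw [h1]
  rw [hK1, hK2, hKG] at hr1
  rw [hK1', hK2', hKG'] at hr2
  have hQ2 : 0 ≤ ⟪hBGu.toLp _ - hBGu'.toLp _, G U₂ - G U₂'⟫ :=
    inner_toLp_sub_nonneg B hBell0 (G U₂) (G U₂') hBGu hBGu'
  have hbG : ⟪hGw.toLp _ - hGw'.toLp _, Pi U₂ - Pi U₂'⟫
      ≤ M * (‖w₁ - w₁'‖ + ‖w₂ - w₂'‖) * ‖Pi U₂ - Pi U₂'‖ :=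
    inner_sub_le' hM.le _ _ _ _ _ hlipg
  have hidr2 : ⟪Pi U₂ - Pi qm, Pi U₂ - Pi U₂'⟫ - ⟪Pi U₂' - Pi qm, Pi U₂ - Pi U₂'⟫
      = ‖Pi U₂ - Pi U₂'‖ ^ 2 := by
    rw [← inner_sub_left, sub_sub_sub_cancel_right, real_inner_self_eq_norm_sq]
  have hidB : ⟪hBGu.toLp _, G U₂ - G U₂'⟫ - ⟪hBGu'.toLp _, G U₂ - G U₂'⟫
      = ⟪hBGu.toLp _ - hBGu'.toLp _, G U₂ - G U₂'⟫ := by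
    rw [← inner_sub_left]
  have hidG : ⟪hGw.toLp _, Pi U₂ - Pi U₂'⟫ - ⟪hGw'.toLp _, Pi U₂ - Pi U₂'⟫
      = ⟪hGw.toLp _ - hGw'.toLp _, Pi U₂ - Pi U₂'⟫ := by
    rw [← inner_sub_left]
  have hkey : δt⁻¹ * ‖Pi U₂ - Pi U₂'‖ ^ 2
      + ⟪hBGu.toLp _ - hBGu'.toLp _, G U₂ - G U₂'⟫
      = ⟪hGw.toLp _ - hGw'.toLp _, Pi U₂ - Pi U₂'⟫ := by
    linear_combination hr1 - hr2 - δt⁻¹ * hidr2 - hidB + hidG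
  have hquad2 : δt⁻¹ * ‖Pi U₂ - Pi U₂'‖ ^ 2
      ≤ M * (‖w₁ - w₁'‖ + ‖w₂ - w₂'‖) * ‖Pi U₂ - Pi U₂'‖ := by
    linarith [hkey, hQ2, hbG]
  have hn2 : ‖Pi U₂ - Pi U₂'‖ ≤ δt * (M * (‖w₁ - w₁'‖ + ‖w₂ - w₂'‖)) :=
    norm_le_of_quad hδt (by positivity) (norm_nonneg _) hquad2
  ---------------------------------------------------------------
  -- Conclusion
  ---------------------------------------------------------------
  rw [map_sub, map_sub]
  calc ‖Pi U₁ - Pi U₁'‖ + ‖Pi U₂ - Pi U₂'‖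
      ≤ δt * (M * (‖w₁ - w₁'‖ + ‖w₂ - w₂'‖)) + δt * (M * (‖w₁ - w₁'‖ + ‖w₂ - w₂'‖)) :=
        add_le_add hn1 hn2
  _ = 2 * M * δt * (‖w₁ - w₁'‖ + ‖w₂ - w₂'‖) := by ring
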